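/- (Poincaré–Birkhoff–Witt, via symmetrization) Let L be a Lie algebra over a field K of characteristic zero with basis X₁,…,Xₙ. The images in the universal enveloping algebra U(L) of the symmetrized monomials Sym(X^(α)) = (1/|α|!) Σ_{σ} X'_{σ(1)}⋯X'_{σ(|α|)}, as (α) ranges over all multi-indices of nonnegative integers, form a K-vector-space basis of U(L). -/

import Mathlib

open scoped BigOperators

noncomputable section

/-- The word `X₁^{α₁} ⋯ Xₙ^{αₙ}` as a list of generator indices. -/
def word (n : ℕ) (α : Fin n → ℕ) : List (Fin n) :=
  (List.finRange n).flatMap fun i => List.replicate (α i) i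

/-- The symmetrization `symz(X^(α)) = (1/m!) ∑_{σ ∈ Σₘ} X'_{σ(1)} ⋯ X'_{σ(m)}`
of the monomial `X^(α)` in the free associative algebra. -/
def symz (K : Type) [Field K] (n : ℕ) (α : Fin n → ℕ) : FreeAlgebra K (Fin n) :=
  ((Nat.factorial (word n α).length : K))⁻¹ •
    ∑ σ : Equiv.Perm (Fin (word n α).length),
      (List.ofFn fun j => FreeAlgebra.ι K ((word n α).get (σ j))).prod

/-- Regular homogeneous polynomials of degree `m`: the span of `m`-th powers of
linear forms in the generators. -/
def RegHom (K : Type) [Field K] (n m : ℕ) : Submodule K (FreeAlgebra K (Fin n)) :=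
  Submodule.span K {x | ∃ c : Fin n → K, x = (∑ i, c i • FreeAlgebra.ι K i) ^ m}

/-- Regular polynomials: the span of all powers of linear forms in the generators. -/
def Reg (K : Type) [Field K] (n : ℕ) : Submodule K (FreeAlgebra K (Fin n)) :=
  Submodule.span K {x | ∃ (m : ℕ) (c : Fin n → K), x = (∑ i, c i • FreeAlgebra.ι K i) ^ m}

/-- The symmetrization map `Φ` from commutative polynomials to the free algebra,
sending `x^(α)` to `symz(X^(α))` and extended linearly. -/
def Phi (K : Type) [Field K] (n : ℕ) (p : MvPolynomial (Fin n) K) : FreeAlgebra K (Fin n) :=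
  ∑ d ∈ p.support, p.coeff d • symz K n (fun i => d i)


/-- The embedding of the Lie algebra `L` into the free algebra via the basis `b`. -/
def emb (K : Type) [Field K] (n : ℕ) {L : Type} [LieRing L] [LieAlgebra K L]
    (b : Module.Basis (Fin n) K L) (x : L) : FreeAlgebra K (Fin n) :=
  ∑ k, b.repr x k • FreeAlgebra.ι K k

/-- The two-sided ideal `J` generated by `XY - YX - [X,Y]`, `X, Y ∈ L`, realized as the
span of all trinomial products `P (XY - YX - [X,Y]) Q`. -/
def Jspan (K : Type) [Field K] (n : ℕ) {L : Type} [LieRing L] [LieAlgebra K L]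
    (b : Module.Basis (Fin n) K L) : Submodule K (FreeAlgebra K (Fin n)) :=
  Submodule.span K {x | ∃ (P Q : FreeAlgebra K (Fin n)) (X Y : L),
    x = P * (emb K n b X * emb K n b Y - emb K n b Y * emb K n b X - emb K n b ⁅X, Y⁆) * Q}

/-- Elements of degree at most `k` in the free algebra. -/
def Fdeg (K : Type) [Field K] (n k : ℕ) : Submodule K (FreeAlgebra K (Fin n)) :=
  Submodule.span K {x | ∃ l : List (Fin n), l.length ≤ k ∧ x = (l.map (FreeAlgebra.ι K)).prod}

/-!
Modulo `J`, swapping two adjacent letters of a word changes it by a word of smaller length,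
since `XY - YX ≡ [X,Y]`. Hence every word is congruent to the symmetrization of its multidegree
modulo shorter words, and the symmetrized monomials span `U(L)`.

For independence, build the Poincaré–Birkhoff–Witt representation of `L` on `K[x₁,…,xₙ]`:
`X_i` sends an ordered monomial `x^β` to `x^(β + eᵢ)` when `i ≤ min β`, and otherwise, writing
`x^β = x_j x^β'` with `j = min β < i`, to `X_j (X_i x^β') + [X_i, X_j] x^β'`. An induction on the
degree, in which the Jacobi identity is the key input, shows that this is a representation, so
the free algebra acts through `U(L)`. Applied to `1`, the symmetrization of `X^α` becomes
`x^α` plus terms of lower degree, and such polynomials are linearly independent.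
-/

open MvPolynomial

namespace PBW

section Degree

variable {R σ : Type*} [CommSemiring R]

variable (R σ) in
def degreeLT (m : ℕ) : Submodule R (MvPolynomial σ R) :=
  restrictSupport R {d | d.degree < m}

lemma mem_degreeLT {m : ℕ} {p : MvPolynomial σ R} :
    p ∈ degreeLT R σ m ↔ ∀ d ∈ p.support, d.degree < m :=
  mem_restrictSupport_iff R

lemma degreeLT_mono {m m' : ℕ} (h : m ≤ m') : degreeLT R σ m ≤ degreeLT R σ m' :=
  restrictSupport_mono _ fun _ hd => lt_of_lt_of_le hd h

lemma monomial_mem_degreeLT {m : ℕ} {d : σ →₀ ℕ} (hd : d.degree < m) (r : R) :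
    monomial d r ∈ degreeLT R σ m :=
  (monomial_mem_restrictSupport R).2 (Or.inl hd)

lemma degreeLT_le_iff {m : ℕ} {S : Submodule R (MvPolynomial σ R)} :
    degreeLT R σ m ≤ S ↔ ∀ d : σ →₀ ℕ, d.degree < m → monomial d 1 ∈ S := by
  rw [degreeLT, restrictSupport_eq_span, Submodule.span_le, Set.image_subset_iff]
  rfl

lemma coeff_eq_zero_of_mem_degreeLT {m : ℕ} {p : MvPolynomial σ R} {d : σ →₀ ℕ}
    (hp : p ∈ degreeLT R σ m) (hd : m ≤ d.degree) : coeff d p = 0 :=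
  notMem_support_iff.1 fun h => (mem_degreeLT.1 hp d h).not_ge hd

end Degree

section Triangular

variable {σ R : Type*} [CommRing R]

theorem linearIndependent_of_sub_monomial_mem_degreeLT {ι : Type*} {f : ι → MvPolynomial σ R}
    {e : ι → σ →₀ ℕ} (he : Function.Injective e)
    (hf : ∀ i, f i - monomial (e i) (1 : R) ∈ degreeLT R σ (e i).degree) :
    LinearIndependent R f := by
  classical
  rw [linearIndependent_iff]
  intro g hg
  by_contra hne
  obtain ⟨i₀, hi₀, hmax⟩ := g.support.exists_max_image (fun i => (e i).degree)
    (Finsupp.support_nonempty_iff.2 hne)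
  have hcoeff : ∀ i ∈ g.support, coeff (e i₀) (f i) = if i = i₀ then 1 else 0 := by
    intro i hi
    have h := coeff_eq_zero_of_mem_degreeLT (hf i) (hmax i hi)
    rw [coeff_sub, sub_eq_zero, coeff_monomial] at h
    simp only [h, he.eq_iff]
  have := congrArg (coeff (e i₀)) hg
  rw [Finsupp.linearCombination_apply, Finsupp.sum, coeff_sum, coeff_zero,
    Finset.sum_congr rfl fun i hi => by rw [coeff_smul, hcoeff i hi, smul_eq_mul, mul_ite,
      mul_one, mul_zero], Finset.sum_ite_eq' _ _ _, if_pos hi₀] at this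
  exact Finsupp.mem_support_iff.1 hi₀ this

end Triangular

section MultiIndex

variable {σ : Type*}

lemma tsub_single_add_single {β : σ →₀ ℕ} {j : σ} (hj : j ∈ β.support) :
    β - Finsupp.single j 1 + Finsupp.single j 1 = β :=
  tsub_add_cancel_of_le
    (Finsupp.single_le_iff.2 (Nat.one_le_iff_ne_zero.2 (Finsupp.mem_support_iff.1 hj)))

lemma degree_tsub_single_lt {β : σ →₀ ℕ} {j : σ} (hj : j ∈ β.support) :
    (β - Finsupp.single j 1).degree < β.degree := by
  conv_rhs => rw [← tsub_single_add_single hj]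
  simp

variable [LinearOrder σ]

lemma exists_eq_add_single_of_mem_support {β : σ →₀ ℕ} {m : σ} (hm : m ∈ β.support) :
    ∃ j β', j ≤ m ∧ j ∈ lowerBounds (β'.support : Set σ) ∧ β = β' + Finsupp.single j 1 := by
  refine ⟨β.support.min' ⟨m, hm⟩, β - Finsupp.single _ 1, β.support.min'_le _ hm,
    fun k hk => ?_, (tsub_single_add_single (β.support.min'_mem _)).symm⟩
  exact β.support.min'_le _ (Finsupp.support_mono tsub_le_self hk)

lemma mem_lowerBounds_support_add_single {β : σ →₀ ℕ} {j c : σ}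
    (hj : j ∈ lowerBounds (β.support : Set σ)) (hjc : j ≤ c) :
    j ∈ lowerBounds ((β + Finsupp.single c 1).support : Set σ) := by
  intro k hk
  rcases Finset.mem_union.1 (Finsupp.support_add hk) with hk | hk
  · exact hj hk
  · rwa [Finset.mem_singleton.1 (Finsupp.support_single_subset hk)]

end MultiIndex

section Words

variable (K : Type*) [CommSemiring K] {X : Type*}

def wordProd (l : List X) : FreeAlgebra K X := (l.map (FreeAlgebra.ι K)).prod

variable (X) in
def shortWords (m : ℕ) : Submodule K (FreeAlgebra K X) :=
  Submodule.span K (wordProd K '' {l | l.length < m})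

lemma wordProd_cons (i : X) (l : List X) :
    wordProd K (i :: l) = FreeAlgebra.ι K i * wordProd K l := by
  simp [wordProd]

lemma span_range_wordProd : Submodule.span K (Set.range (wordProd K (X := X))) = ⊤ := by
  have h := Algebra.adjoin_eq_span (R := K) (Set.range (FreeAlgebra.ι K (X := X)))
  rw [FreeAlgebra.adjoin_range_ι, Algebra.top_toSubmodule, ← FreeMonoid.mrange_lift] at h
  rw [h]
  congr 1
  ext x
  simp only [MonoidHom.coe_mrange, Set.mem_range, FreeMonoid.lift_apply, wordProd]
  exact Iff.rfl

variable {K}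

lemma shortWords_le_iff {m : ℕ} {S : Submodule K (FreeAlgebra K X)} :
    shortWords K X m ≤ S ↔ ∀ l : List X, l.length < m → wordProd K l ∈ S := by
  rw [shortWords, Submodule.span_le, Set.image_subset_iff]
  rfl

lemma wordProd_mem_shortWords {m : ℕ} {l : List X} (hl : l.length < m) :
    wordProd K l ∈ shortWords K X m :=
  Submodule.subset_span ⟨l, hl, rfl⟩

lemma ι_mul_mem_shortWords (i : X) {m : ℕ} {z : FreeAlgebra K X}
    (hz : z ∈ shortWords K X m) : FreeAlgebra.ι K i * z ∈ shortWords K X (m + 1) := by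
  have : shortWords K X m ≤
      (shortWords K X (m + 1)).comap (LinearMap.mulLeft K (FreeAlgebra.ι K i)) :=
    shortWords_le_iff.2 fun l hl => by
      simpa [← wordProd_cons] using wordProd_mem_shortWords (l := i :: l) (by simpa using hl)
  exact this hz

lemma degree_toFinsupp [DecidableEq X] (l : List X) :
    (Multiset.toFinsupp (l : Multiset X)).degree = l.length := by
  rw [← Multiset.coe_card, ← Multiset.toFinsupp_sum_eq]
  rfl

lemma toFinsupp_cons [DecidableEq X] (i : X) (l : List X) :
    Multiset.toFinsupp ↑(i :: l) = Multiset.toFinsupp ↑l + Finsupp.single i 1 := by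
  rw [← Multiset.cons_coe, ← Multiset.singleton_add, Multiset.toFinsupp_add,
    Multiset.toFinsupp_singleton, add_comm]

lemma count_word {n : ℕ} (α : Fin n → ℕ) (i : Fin n) : (word n α).count i = α i := by
  simp [word, List.count_flatMap, List.count_replicate, Function.comp_def, ← List.ofFn_eq_map,
    List.sum_ofFn]

lemma toFinsupp_word {n : ℕ} (α : Fin n → ℕ) :
    Multiset.toFinsupp ↑(word n α) = Finsupp.equivFunOnFinite.symm α := by
  ext i
  simp [Multiset.toFinsupp_apply, count_word]

end Words

section Action

variable {K : Type*} [CommRing K] {n : ℕ}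

theorem actMonomial_induction {motive : Fin n → (Fin n →₀ ℕ) → Prop}
    (ind : ∀ i β, (∀ i' β', β'.degree < β.degree → motive i' β') →
      (∀ i' β', β'.degree ≤ β.degree → i' < i → motive i' β') → motive i β)
    (i : Fin n) (β : Fin n →₀ ℕ) : motive i β :=
  ind i β (fun i' β' _ => actMonomial_induction ind i' β')
    (fun i' β' _ _ => actMonomial_induction ind i' β')
termination_by (β.degree, (i : ℕ))
decreasing_by
  · exact Prod.Lex.left _ _ ‹_›
  · exact Prod.lex_def.2 ((lt_or_eq_of_le ‹_›).imp id fun h => ⟨h, ‹_›⟩)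

variable (c : Fin n → Fin n → Fin n → K)

/-- The action of `X_i` on the ordered monomial `x^β`, for structure constants `c`. When
`j = min β < i`, writing `x^β = x_j x^β'`, it is `X_j (X_i x^β') + ∑ₖ c i j k • X_k x^β'`.
The degree guard always holds (`actMonomial_mem_degreeLT`); it only makes the recursion on
`(degree, index)` well founded. -/
def actMonomial (i : Fin n) (β : Fin n →₀ ℕ) : MvPolynomial (Fin n) K :=
  if h : ∃ j ∈ β.support, j < i then
    have hne : β.support.Nonempty := h.elim fun j hj => ⟨j, hj.1⟩
    let j := β.support.min' hne
    have hji : j < i := h.elim fun j' hj' => (β.support.min'_le j' hj'.1).trans_lt hj'.2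
    have hdeg := degree_tsub_single_lt (β.support.min'_mem hne)
    let β' := β - Finsupp.single j 1
    (∑ γ ∈ (actMonomial i β').support, coeff γ (actMonomial i β') •
        if γ.degree ≤ β.degree then actMonomial j γ else 0) +
      ∑ k, c i j k • actMonomial k β'
  else monomial (β + Finsupp.single i 1) 1
termination_by (β.degree, (i : ℕ))
decreasing_by
  all_goals first
    | exact Prod.Lex.left _ _ hdeg
    | exact Prod.lex_def.2 ((lt_or_eq_of_le ‹_›).imp id fun h => ⟨h, hji⟩)

def act (i : Fin n) : Module.End K (MvPolynomial (Fin n) K) :=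
  (basisMonomials (Fin n) K).constr K (actMonomial c i)

lemma actMonomial_of_mem_lowerBounds {i : Fin n} {β : Fin n →₀ ℕ}
    (hi : i ∈ lowerBounds (β.support : Set (Fin n))) :
    actMonomial c i β = monomial (β + Finsupp.single i 1) 1 := by
  rw [actMonomial, dif_neg]
  rintro ⟨j, hj, hji⟩
  exact (hi hj).not_gt hji

lemma actMonomial_add_single_guarded {i j : Fin n} {β : Fin n →₀ ℕ} (hji : j < i)
    (hj : j ∈ lowerBounds (β.support : Set (Fin n))) :
    actMonomial c i (β + Finsupp.single j 1) =
      (∑ γ ∈ (actMonomial c i β).support, coeff γ (actMonomial c i β) •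
        if γ.degree ≤ β.degree + 1 then actMonomial c j γ else 0) +
      ∑ k, c i j k • actMonomial c k β := by
  have hmem : j ∈ (β + Finsupp.single j 1).support := by simp
  have hmin : ∀ hne, (β + Finsupp.single j 1).support.min' hne = j := fun hne =>
    le_antisymm (Finset.min'_le _ _ hmem)
      (Finset.le_min' _ _ _ (mem_lowerBounds_support_add_single hj le_rfl))
  rw [actMonomial, dif_pos ⟨j, hmem, hji⟩]
  simp only [hmin, add_tsub_cancel_right, map_add, Finsupp.degree_single]

lemma act_monomial (i : Fin n) (β : Fin n →₀ ℕ) (r : K) :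
    act c i (monomial β r) = r • actMonomial c i β := by
  rw [show monomial β r = r • monomial β (1 : K) by rw [smul_monomial, smul_eq_mul, mul_one],
    map_smul]
  congr 1
  simpa [act] using (basisMonomials (Fin n) K).constr_basis K (actMonomial c i) β

lemma act_apply (i : Fin n) (p : MvPolynomial (Fin n) K) :
    act c i p = ∑ γ ∈ p.support, coeff γ p • actMonomial c i γ := by
  conv_lhs => rw [p.as_sum]
  simp only [map_sum, act_monomial]

lemma actMonomial_mem_degreeLT (i : Fin n) (β : Fin n →₀ ℕ) :
    actMonomial c i β ∈ degreeLT K (Fin n) (β.degree + 2) := by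
  induction i, β using actMonomial_induction with
  | ind i β IHdeg IHidx =>
  by_cases hi : i ∈ lowerBounds (β.support : Set (Fin n))
  · rw [actMonomial_of_mem_lowerBounds c hi]
    exact monomial_mem_degreeLT (by simp) _
  obtain ⟨m, hm, hmi⟩ : ∃ m ∈ β.support, m < i := by simpa [lowerBounds] using hi
  obtain ⟨j, β', hjm, hj, rfl⟩ := exists_eq_add_single_of_mem_support hm
  have hdeg : (β' + Finsupp.single j 1).degree = β'.degree + 1 := by simp
  rw [actMonomial_add_single_guarded c (hjm.trans_lt hmi) hj]
  refine add_mem (sum_mem fun γ _ => Submodule.smul_mem _ _ ?_)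
    (sum_mem fun k _ => Submodule.smul_mem _ _ ?_)
  · split_ifs with hγ
    · exact degreeLT_mono (by omega) (IHidx j γ (by omega) (hjm.trans_lt hmi))
    · exact zero_mem _
  · exact degreeLT_mono (by omega) (IHdeg k β' (by omega))

lemma actMonomial_add_single_of_lt {i j : Fin n} {β : Fin n →₀ ℕ} (hji : j < i)
    (hj : j ∈ lowerBounds (β.support : Set (Fin n))) :
    actMonomial c i (β + Finsupp.single j 1) =
      act c j (actMonomial c i β) + ∑ k, c i j k • actMonomial c k β := by
  rw [actMonomial_add_single_guarded c hji hj, act_apply]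
  congr 1
  refine Finset.sum_congr rfl fun γ hγ => ?_
  rw [if_pos (Nat.lt_succ_iff.1 ((mem_degreeLT.1 (actMonomial_mem_degreeLT c i β)) γ hγ))]

lemma act_mem_degreeLT (i : Fin n) {m : ℕ} {p : MvPolynomial (Fin n) K}
    (hp : p ∈ degreeLT K (Fin n) m) : act c i p ∈ degreeLT K (Fin n) (m + 1) := by
  rw [act_apply]
  exact sum_mem fun γ hγ => Submodule.smul_mem _ _
    (degreeLT_mono (by have := mem_degreeLT.1 hp γ hγ; omega) (actMonomial_mem_degreeLT c i γ))

lemma actMonomial_sub_monomial_mem_degreeLT (i : Fin n) (β : Fin n →₀ ℕ) :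
    actMonomial c i β - monomial (β + Finsupp.single i 1) 1 ∈
      degreeLT K (Fin n) (β.degree + 1) := by
  induction i, β using actMonomial_induction with
  | ind i β IHdeg IHidx =>
  by_cases hi : i ∈ lowerBounds (β.support : Set (Fin n))
  · rw [actMonomial_of_mem_lowerBounds c hi, sub_self]
    exact zero_mem _
  obtain ⟨m, hm, hmi⟩ : ∃ m ∈ β.support, m < i := by simpa [lowerBounds] using hi
  obtain ⟨j, β', hjm, hj, rfl⟩ := exists_eq_add_single_of_mem_support hm
  have hji := hjm.trans_lt hmi
  have hdeg : (β' + Finsupp.single j 1).degree = β'.degree + 1 := by simp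
  have hdeg' : (β' + Finsupp.single i 1).degree = β'.degree + 1 := by simp
  set w := actMonomial c i β' - monomial (β' + Finsupp.single i 1) 1
  have hsplit : actMonomial c i β' = monomial (β' + Finsupp.single i 1) 1 + w := by
    rw [add_sub_cancel]
  have heq : actMonomial c i (β' + Finsupp.single j 1) -
      monomial (β' + Finsupp.single j 1 + Finsupp.single i 1) 1 =
      (actMonomial c j (β' + Finsupp.single i 1) -
        monomial (β' + Finsupp.single i 1 + Finsupp.single j 1) 1) +
      act c j w + ∑ k, c i j k • actMonomial c k β' := by
    rw [actMonomial_add_single_of_lt c hji hj, hsplit, map_add, act_monomial, one_smul,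
      add_right_comm β']
    abel
  rw [heq, hdeg]
  refine add_mem (add_mem ?_ ?_) (sum_mem fun k _ => Submodule.smul_mem _ _ ?_)
  · exact degreeLT_mono (by omega) (IHidx j _ (by omega) hji)
  · exact act_mem_degreeLT c j (IHdeg i β' (by omega))
  · exact actMonomial_mem_degreeLT c k β'

end Action

section Representation

variable {K : Type*} [CommRing K] {n : ℕ} {L : Type*} [LieRing L] [LieAlgebra K L]
  (b : Module.Basis (Fin n) K L)

def structConst (i j k : Fin n) : K := b.repr ⁅b i, b j⁆ k

def rep : L →ₗ[K] Module.End K (MvPolynomial (Fin n) K) :=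
  b.constr K (act (structConst b))

lemma rep_basis (i : Fin n) : rep b (b i) = act (structConst b) i :=
  b.constr_basis K _ i

lemma rep_apply (x : L) : rep b x = ∑ k, b.repr x k • act (structConst b) k := by
  simp [rep, Module.Basis.constr_apply_fintype]

lemma rep_basis_monomial (i : Fin n) (β : Fin n →₀ ℕ) :
    rep b (b i) (monomial β 1) = actMonomial (structConst b) i β := by
  rw [rep_basis, act_monomial, one_smul]

lemma rep_basis_monomial_of_mem_lowerBounds {i : Fin n} {β : Fin n →₀ ℕ}
    (hi : i ∈ lowerBounds (β.support : Set (Fin n))) :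
    rep b (b i) (monomial β 1) = monomial (β + Finsupp.single i 1) 1 := by
  rw [rep_basis_monomial, actMonomial_of_mem_lowerBounds _ hi]

lemma rep_basis_monomial_add_single {i j : Fin n} {β : Fin n →₀ ℕ} (hji : j < i)
    (hj : j ∈ lowerBounds (β.support : Set (Fin n))) :
    rep b (b i) (monomial (β + Finsupp.single j 1) 1) =
      rep b (b j) (rep b (b i) (monomial β 1)) + rep b ⁅b i, b j⁆ (monomial β 1) := by
  rw [rep_basis_monomial, actMonomial_add_single_of_lt _ hji hj, rep_basis, rep_basis_monomial,
    rep_apply]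
  simp [LinearMap.sum_apply, act_monomial, structConst]

lemma rep_basis_mem_degreeLT (i : Fin n) {m : ℕ} {p : MvPolynomial (Fin n) K}
    (hp : p ∈ degreeLT K (Fin n) m) : rep b (b i) p ∈ degreeLT K (Fin n) (m + 1) := by
  rw [rep_basis]
  exact act_mem_degreeLT _ i hp

lemma rep_basis_monomial_sub_mem_degreeLT (i : Fin n) (β : Fin n →₀ ℕ) :
    rep b (b i) (monomial β 1) - monomial (β + Finsupp.single i 1) 1 ∈
      degreeLT K (Fin n) (β.degree + 1) := by
  rw [rep_basis_monomial]
  exact actMonomial_sub_monomial_mem_degreeLT _ i β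

def lieEqLocus : Submodule K (MvPolynomial (Fin n) K) :=
  ⨅ x : L, ⨅ y : L, LinearMap.eqLocus (rep b ⁅x, y⁆) ⁅rep b x, rep b y⁆

lemma mem_lieEqLocus {p : MvPolynomial (Fin n) K} :
    p ∈ lieEqLocus b ↔ ∀ x y, rep b ⁅x, y⁆ p = rep b x (rep b y p) - rep b y (rep b x p) := by
  simp only [lieEqLocus, Submodule.mem_iInf, LinearMap.mem_eqLocus, Ring.lie_def,
    LinearMap.sub_apply, Module.End.mul_apply]

lemma mem_lieEqLocus_of_lt {p : MvPolynomial (Fin n) K}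
    (h : ∀ i j, j < i →
      rep b ⁅b i, b j⁆ p = rep b (b i) (rep b (b j) p) - rep b (b j) (rep b (b i) p)) :
    p ∈ lieEqLocus b := by
  let B : L →ₗ[K] L →ₗ[K] MvPolynomial (Fin n) K := LinearMap.mk₂ K
    (fun x y => rep b x (rep b y p) - rep b y (rep b x p) - rep b ⁅x, y⁆ p)
    (by intros; simp only [map_add, LinearMap.add_apply, add_lie]; abel)
    (by intros; simp only [map_smul, LinearMap.smul_apply, smul_lie, smul_sub])
    (by intros; simp only [map_add, LinearMap.add_apply, lie_add]; abel)
    (by intros; simp only [map_smul, LinearMap.smul_apply, lie_smul, smul_sub])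
  have hB : B = 0 := LinearMap.ext_basis b b fun i j => by
    simp only [B, LinearMap.mk₂_apply, LinearMap.zero_apply, sub_eq_zero]
    rcases lt_trichotomy j i with hji | rfl | hij
    · exact (h i j hji).symm
    · simp
    · rw [← lie_skew, map_neg, LinearMap.neg_apply, h j i hij]
      abel
  refine (mem_lieEqLocus b).2 fun x y => ?_
  have := LinearMap.congr_fun₂ hB x y
  simp only [B, LinearMap.mk₂_apply, LinearMap.zero_apply, sub_eq_zero] at this
  exact this.symm

lemma rep_lie_basis_monomial_of_mem_lowerBounds {i j : Fin n} {β : Fin n →₀ ℕ} (hji : j < i)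
    (hj : j ∈ lowerBounds (β.support : Set (Fin n))) :
    rep b ⁅b i, b j⁆ (monomial β 1) =
      rep b (b i) (rep b (b j) (monomial β 1)) - rep b (b j) (rep b (b i) (monomial β 1)) := by
  rw [rep_basis_monomial_of_mem_lowerBounds b hj, rep_basis_monomial_add_single b hji hj]
  abel

lemma rep_lie_basis_rep_basis_monomial {a k c : Fin n} {β : Fin n →₀ ℕ}
    (hβ : degreeLT K (Fin n) (β.degree + 1) ≤ lieEqLocus b) (hka : k < a) (hkc : k ≤ c)
    (hk : k ∈ lowerBounds (β.support : Set (Fin n))) :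
    rep b ⁅b a, b k⁆ (rep b (b c) (monomial β 1)) =
      rep b (b a) (rep b (b k) (rep b (b c) (monomial β 1))) -
        rep b (b k) (rep b (b a) (rep b (b c) (monomial β 1))) := by
  -- `X_c x^β` is `x^(β + e_c)`, covered by the previous lemma, plus terms of lower degree.
  have hlower := (mem_lieEqLocus b).1 (hβ (rep_basis_monomial_sub_mem_degreeLT b c β)) (b a) (b k)
  have hleading := rep_lie_basis_monomial_of_mem_lowerBounds b hka
    (mem_lowerBounds_support_add_single hk hkc)
  simp only [map_sub] at hlower
  linear_combination hlower + hleading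

lemma rep_lie_basis_monomial_add_single {i j k : Fin n} {β : Fin n →₀ ℕ}
    (hβ : degreeLT K (Fin n) (β.degree + 1) ≤ lieEqLocus b) (hkj : k < j) (hji : j < i)
    (hk : k ∈ lowerBounds (β.support : Set (Fin n))) :
    rep b ⁅b i, b j⁆ (monomial (β + Finsupp.single k 1) 1) =
      rep b (b i) (rep b (b j) (monomial (β + Finsupp.single k 1) 1)) -
        rep b (b j) (rep b (b i) (monomial (β + Finsupp.single k 1) 1)) := by
  have hmono := (mem_lieEqLocus b).1 (hβ (monomial_mem_degreeLT (Nat.lt_succ_self _) 1))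
  have hij := congrArg (rep b (b k)) (hmono (b i) (b j))
  rw [map_sub] at hij
  have hjacobi : rep b ⁅⁅b i, b j⁆, b k⁆ (monomial β 1) =
      rep b ⁅b i, ⁅b j, b k⁆⁆ (monomial β 1) - rep b ⁅b j, ⁅b i, b k⁆⁆ (monomial β 1) := by
    rw [lie_lie, map_sub, LinearMap.sub_apply]
  rw [rep_basis_monomial_add_single b hkj hk, rep_basis_monomial_add_single b (hkj.trans hji) hk,
    map_add, map_add, ← rep_basis_monomial_of_mem_lowerBounds b hk]
  -- After expanding by the recursion at `k = min`, what remains is the Jacobi identity.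
  linear_combination -hmono ⁅b i, b j⁆ (b k) + hjacobi + hij + hmono (b i) ⁅b j, b k⁆ -
    hmono (b j) ⁅b i, b k⁆ + rep_lie_basis_rep_basis_monomial b hβ (hkj.trans hji) hkj.le hk -
    rep_lie_basis_rep_basis_monomial b hβ hkj (hkj.trans hji).le hk

lemma monomial_mem_lieEqLocus {β : Fin n →₀ ℕ} (hβ : degreeLT K (Fin n) β.degree ≤ lieEqLocus b) :
    monomial β 1 ∈ lieEqLocus b := by
  refine mem_lieEqLocus_of_lt b fun i j hji => ?_
  by_cases hj : j ∈ lowerBounds (β.support : Set (Fin n))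
  · exact rep_lie_basis_monomial_of_mem_lowerBounds b hji hj
  obtain ⟨m, hm, hmj⟩ : ∃ m ∈ β.support, m < j := by simpa [lowerBounds] using hj
  obtain ⟨k, β', hkm, hk, rfl⟩ := exists_eq_add_single_of_mem_support hm
  exact rep_lie_basis_monomial_add_single b (by simpa using hβ) (hkm.trans_lt hmj) hji hk

lemma degreeLT_le_lieEqLocus (N : ℕ) : degreeLT K (Fin n) N ≤ lieEqLocus b := by
  induction N with
  | zero => exact degreeLT_le_iff.2 fun d hd => absurd hd (Nat.not_lt_zero _)
  | succ N ih =>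
    exact degreeLT_le_iff.2 fun d hd =>
      monomial_mem_lieEqLocus b ((degreeLT_mono (by omega)).trans ih)

theorem rep_lie (x y : L) : rep b ⁅x, y⁆ = ⁅rep b x, rep b y⁆ := by
  refine LinearMap.ext fun p => ?_
  have hp : p ∈ degreeLT K (Fin n) (p.support.sup Finsupp.degree + 1) :=
    mem_degreeLT.2 fun d hd => Nat.lt_succ_of_le (Finset.le_sup hd)
  rw [(mem_lieEqLocus b).1 (degreeLT_le_lieEqLocus b _ hp), Ring.lie_def, LinearMap.sub_apply,
    Module.End.mul_apply, Module.End.mul_apply]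

def freeRep : FreeAlgebra K (Fin n) →ₐ[K] Module.End K (MvPolynomial (Fin n) K) :=
  FreeAlgebra.lift K fun i => rep b (b i)

def evalOne : FreeAlgebra K (Fin n) →ₗ[K] MvPolynomial (Fin n) K :=
  LinearMap.applyₗ (1 : MvPolynomial (Fin n) K) ∘ₗ (freeRep b).toLinearMap

lemma freeRep_ι (i : Fin n) : freeRep b (FreeAlgebra.ι K i) = rep b (b i) :=
  FreeAlgebra.lift_ι_apply _ _

lemma evalOne_apply (z : FreeAlgebra K (Fin n)) : evalOne b z = freeRep b z 1 := rfl

lemma evalOne_wordProd_sub_mem (l : List (Fin n)) :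
    evalOne b (wordProd K l) - monomial (Multiset.toFinsupp ↑l) 1 ∈
      degreeLT K (Fin n) l.length := by
  induction l with
  | nil => simp [evalOne_apply, wordProd]
  | cons i l ih =>
    have hsplit : evalOne b (wordProd K l) = monomial (Multiset.toFinsupp ↑l) 1 +
        (evalOne b (wordProd K l) - monomial (Multiset.toFinsupp ↑l) 1) := by
      rw [add_sub_cancel]
    rw [evalOne_apply, wordProd_cons, map_mul, Module.End.mul_apply, freeRep_ι, ← evalOne_apply,
      hsplit, map_add, toFinsupp_cons, add_sub_right_comm, List.length_cons]
    refine add_mem ?_ (rep_basis_mem_degreeLT b i ih)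
    simpa [degree_toFinsupp] using rep_basis_monomial_sub_mem_degreeLT b i (Multiset.toFinsupp ↑l)

end Representation

section Enveloping

variable {K : Type} [Field K] {n : ℕ} {L : Type} [LieRing L] [LieAlgebra K L]
  (b : Module.Basis (Fin n) K L)

lemma symz_sub_wordProd_mem [CharZero K] {S : Submodule K (FreeAlgebra K (Fin n))}
    (α : Fin n → ℕ) (h : ∀ l, l.Perm (word n α) → wordProd K l - wordProd K (word n α) ∈ S) :
    symz K n α - wordProd K (word n α) ∈ S := by
  set w := word n α
  have hfact : (w.length.factorial : K) ≠ 0 := Nat.cast_ne_zero.2 w.length.factorial_ne_zero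
  have hsymz : symz K n α - wordProd K w = (w.length.factorial : K)⁻¹ •
      ∑ σ : Equiv.Perm (Fin w.length), (wordProd K (List.ofFn (w.get ∘ σ)) - wordProd K w) := by
    rw [Finset.sum_sub_distrib, smul_sub, Finset.sum_const, Finset.card_univ, Fintype.card_perm,
      Fintype.card_fin, ← Nat.cast_smul_eq_nsmul K, inv_smul_smul₀ hfact, symz]
    simp [wordProd, List.map_ofFn, Function.comp_def]
    rfl
  rw [hsymz]
  refine Submodule.smul_mem _ _ (sum_mem fun σ _ => h _ ?_)
  simpa using σ.ofFn_comp_perm w.get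

lemma emb_basis (i : Fin n) : emb K n b (b i) = FreeAlgebra.ι K i := by
  simp [emb, Finsupp.single_apply]

lemma freeRep_emb (x : L) : freeRep b (emb K n b x) = rep b x := by
  simp only [emb, map_sum, map_smul, freeRep_ι]
  conv_rhs => rw [← b.sum_repr x, map_sum]
  simp only [map_smul]

lemma Jspan_le_ker_freeRep : Jspan K n b ≤ LinearMap.ker (freeRep b).toLinearMap := by
  rw [Jspan, Submodule.span_le]
  rintro _ ⟨P, Q, X, Y, rfl⟩
  simp [freeRep_emb, rep_lie, Ring.lie_def]

lemma evalOne_symz_sub_mem [CharZero K] (α : Fin n → ℕ) :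
    evalOne b (symz K n α) - monomial (Finsupp.equivFunOnFinite.symm α) 1 ∈
      degreeLT K (Fin n) (Finsupp.equivFunOnFinite.symm α).degree := by
  have hperm : ∀ l, l.Perm (word n α) → evalOne b (wordProd K l) -
      monomial (Finsupp.equivFunOnFinite.symm α) 1 ∈
        degreeLT K (Fin n) (Finsupp.equivFunOnFinite.symm α).degree := by
    intro l hl
    have := evalOne_wordProd_sub_mem b l
    rwa [Multiset.coe_eq_coe.2 hl, toFinsupp_word, ← degree_toFinsupp, Multiset.coe_eq_coe.2 hl,
      toFinsupp_word] at this
  have hsymz : symz K n α - wordProd K (word n α) ∈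
      (degreeLT K (Fin n) (Finsupp.equivFunOnFinite.symm α).degree).comap (evalOne b) :=
    symz_sub_wordProd_mem α fun l hl => by
      rw [Submodule.mem_comap, map_sub, ← sub_sub_sub_cancel_right _ _
        (monomial (Finsupp.equivFunOnFinite.symm α) 1)]
      exact sub_mem (hperm l hl) (hperm _ (.refl _))
  rw [Submodule.mem_comap, map_sub] at hsymz
  rw [← sub_add_sub_cancel _ (evalOne b (wordProd K (word n α)))]
  exact add_mem hsymz (hperm _ (.refl _))

theorem linearIndependent_mkQ_symz [CharZero K] :
    LinearIndependent K fun α : Fin n → ℕ => (Jspan K n b).mkQ (symz K n α) := by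
  have hJ : Jspan K n b ≤ LinearMap.ker (evalOne b) :=
    (Jspan_le_ker_freeRep b).trans (LinearMap.ker_le_ker_comp _ _)
  refine LinearIndependent.of_comp ((Jspan K n b).liftQ (evalOne b) hJ) ?_
  exact linearIndependent_of_sub_monomial_mem_degreeLT Finsupp.equivFunOnFinite.symm.injective
    (evalOne_symz_sub_mem b)

lemma mul_mem_Jspan (a : FreeAlgebra K (Fin n)) {z : FreeAlgebra K (Fin n)}
    (hz : z ∈ Jspan K n b) : a * z ∈ Jspan K n b := by
  have : Jspan K n b ≤ (Jspan K n b).comap (LinearMap.mulLeft K a) := by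
    rw [Jspan, Submodule.span_le]
    rintro _ ⟨P, Q, X, Y, rfl⟩
    exact Submodule.subset_span ⟨a * P, Q, X, Y, by simp [mul_assoc]⟩
  exact this hz

lemma emb_mul_wordProd_mem (x : L) (l : List (Fin n)) :
    emb K n b x * wordProd K l ∈ shortWords K (Fin n) (l.length + 2) := by
  rw [emb, Finset.sum_mul]
  refine sum_mem fun k _ => ?_
  rw [smul_mul_assoc, ← wordProd_cons]
  exact Submodule.smul_mem _ _ (wordProd_mem_shortWords (by simp))

lemma wordProd_sub_mem_of_perm {l l' : List (Fin n)} (h : l.Perm l') :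
    wordProd K l - wordProd K l' ∈ Jspan K n b ⊔ shortWords K (Fin n) l.length := by
  induction h with
  | nil => simp
  | cons i _ ih =>
    obtain ⟨u, hu, v, hv, huv⟩ := Submodule.mem_sup.1 ih
    rw [wordProd_cons, wordProd_cons, ← mul_sub, ← huv, mul_add]
    exact Submodule.add_mem_sup (mul_mem_Jspan b _ hu) (ι_mul_mem_shortWords i hv)
  | swap x y l =>
    have hrel : -1 * (emb K n b (b x) * emb K n b (b y) - emb K n b (b y) * emb K n b (b x) -
        emb K n b ⁅b x, b y⁆) * wordProd K l ∈ Jspan K n b :=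
      Submodule.subset_span ⟨-1, wordProd K l, b x, b y, rfl⟩
    have heq : wordProd K (y :: x :: l) - wordProd K (x :: y :: l) =
        -1 * (emb K n b (b x) * emb K n b (b y) - emb K n b (b y) * emb K n b (b x) -
          emb K n b ⁅b x, b y⁆) * wordProd K l - emb K n b ⁅b x, b y⁆ * wordProd K l := by
      simp only [wordProd_cons, emb_basis]
      noncomm_ring
    rw [heq]
    exact sub_mem (Submodule.mem_sup_left hrel)
      (Submodule.mem_sup_right (by simpa using emb_mul_wordProd_mem b ⁅b x, b y⁆ l))
  | trans h₁₂ _ ih₁₂ ih₂₃ =>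
    rw [← h₁₂.length_eq] at ih₂₃
    simpa using add_mem ih₁₂ ih₂₃

lemma shortWords_le_of_symz_mem [CharZero K] {S : Submodule K (FreeAlgebra K (Fin n))}
    (hJ : Jspan K n b ≤ S) (hsymz : ∀ α, symz K n α ∈ S) (m : ℕ) :
    shortWords K (Fin n) m ≤ S := by
  induction m with
  | zero => exact shortWords_le_iff.2 fun l hl => absurd hl (Nat.not_lt_zero _)
  | succ m ih =>
    refine shortWords_le_iff.2 fun l hl => ?_
    set α : Fin n → ℕ := fun i => l.count i
    have hperm : l.Perm (word n α) := List.perm_iff_count.2 fun i => (count_word α i).symm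
    have hshort : shortWords K (Fin n) l.length ≤ S :=
      shortWords_le_iff.2 fun l' hl' => ih (wordProd_mem_shortWords (by omega))
    have hsub : symz K n α - wordProd K (word n α) ∈ Jspan K n b ⊔ shortWords K (Fin n) l.length :=
      symz_sub_wordProd_mem α fun l' hl' => by
        simpa [hl'.length_eq, ← hperm.length_eq] using wordProd_sub_mem_of_perm b hl'
    have hdiff := sup_le hJ hshort (sub_mem (wordProd_sub_mem_of_perm b hperm) hsub)
    simpa using add_mem hdiff (hsymz α)

theorem span_mkQ_symz_eq_top [CharZero K] :
    Submodule.span K (Set.range fun α : Fin n → ℕ => (Jspan K n b).mkQ (symz K n α)) = ⊤ := by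
  set T := Submodule.span K (Set.range fun α : Fin n → ℕ => (Jspan K n b).mkQ (symz K n α))
  have hT : T.comap (Jspan K n b).mkQ = ⊤ := by
    rw [eq_top_iff, ← span_range_wordProd, Submodule.span_le]
    rintro _ ⟨l, rfl⟩
    refine shortWords_le_of_symz_mem b (S := T.comap (Jspan K n b).mkQ) (fun z hz => ?_)
      (fun α => Submodule.subset_span (Set.mem_range_self α)) _
      (wordProd_mem_shortWords (Nat.lt_succ_self l.length))
    simp [(Submodule.Quotient.mk_eq_zero _).2 hz]
  rw [← Submodule.map_comap_eq_of_surjective (Submodule.mkQ_surjective _) T, hT,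
    Submodule.map_top, Submodule.range_mkQ]

end Enveloping

end PBW

theorem pbw_symmetrized_monomials_basis (K : Type) [Field K] [CharZero K]
    (n : ℕ) (L : Type) [LieRing L] [LieAlgebra K L] (b : Module.Basis (Fin n) K L) :
    LinearIndependent K
        (fun α : Fin n → ℕ => (Jspan K n b).mkQ (symz K n α)) ∧
      Submodule.span K
          (Set.range fun α : Fin n → ℕ => (Jspan K n b).mkQ (symz K n α)) = ⊤ :=
  ⟨PBW.linearIndependent_mkQ_symz b, PBW.span_mkQ_symz_eq_top b⟩

end
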